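/- arXiv:2310.07148 — 3 statements merged into one kernel-verified Lean document; each statement's English description precedes it below -/
import Mathlib

section
/- Let n ≥ 1, let G be an additive commutative group, and let T₁, T₂, A₁, A₂, B : Fin n → G. Let π₁ and π₂ be permutations of Fin n, acting on an n-tuple X : Fin n → G by (π(X))_i = X_{π(i)}. Set T = T₁ + T₂ (pointwise), Δ = π₂(π₁(A₂) + A₁) − B, Z₂ = T₂ − A₂, and Z₁ = π₁(Z₂ + T₁) − A₁. Then B + (π₂(Z₁) + Δ) = π₂(π₁(T)); that is, the two output shares of the oblivious shuffle protocol reconstruct exactly the database T shuffled by the joint permutation π₂∘π₁. -/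
/-! The masks cancel: server 1 removes `A₂` inside `π₁` and `A₁` outside it, and `Δ` adds back
exactly `π₂(π₁(A₂) + A₁)`, while `B` appears once with each sign. Only additivity of the two
permutation actions is used, so the protocol is correct for any pair of additive maps. -/

theorem map_map_masked_shares_add {M N P : Type*} [AddCommGroup M] [AddCommGroup N]
    [AddCommGroup P] (f₁ : M →+ N) (f₂ : N →+ P) (T₁ T₂ A₂ : M) (A₁ : N) (B : P) :
    B + (f₂ (f₁ (T₂ - A₂ + T₁) - A₁) + (f₂ (f₁ A₂ + A₁) - B)) = f₂ (f₁ (T₁ + T₂)) := by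
  have masks_cancel : f₁ (T₂ - A₂ + T₁) - A₁ + (f₁ A₂ + A₁) = f₁ (T₁ + T₂) := by
    rw [add_comm (f₁ A₂), ← add_assoc, sub_add_cancel, ← map_add]
    congr 1
    abel
  rw [← masks_cancel, map_add f₂ (f₁ _ - A₁)]
  abel

theorem oblivious_shuffle_correct_general (n : ℕ) (G : Type*) [AddCommGroup G]
    (T₁ T₂ A₁ A₂ B T Δ Z₁ Z₂ : Fin n → G) (π₁ π₂ : Equiv.Perm (Fin n))
    (hT : T = T₁ + T₂)
    (hΔ : Δ = (fun i => ((fun j => A₂ (π₁ j)) + A₁) (π₂ i)) - B)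
    (hZ₂ : Z₂ = T₂ - A₂)
    (hZ₁ : Z₁ = (fun i => (Z₂ + T₁) (π₁ i)) - A₁) :
    B + ((fun i => Z₁ (π₂ i)) + Δ) = fun i => T (π₁ (π₂ i)) := by
  subst hT hΔ hZ₂ hZ₁
  exact map_map_masked_shares_add (LinearMap.funLeft ℤ G π₁).toAddMonoidHom
    (LinearMap.funLeft ℤ G π₂).toAddMonoidHom T₁ T₂ A₂ A₁ B

/-- Correctness of the oblivious shuffle protocol: the two output shares
`B` and `π₂(Z₁) + Δ` reconstruct the database `T = T₁ + T₂` shuffled by the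
joint permutation `π₂ ∘ π₁`, where a permutation `π` acts on an `n`-tuple `X`
by `(π(X)) i = X (π i)`. -/
theorem oblivious_shuffle_correct (n : ℕ) (hn : 1 ≤ n) (G : Type*) [AddCommGroup G]
    (T₁ T₂ A₁ A₂ B T Δ Z₁ Z₂ : Fin n → G) (π₁ π₂ : Equiv.Perm (Fin n))
    (hT : T = T₁ + T₂)
    (hΔ : Δ = (fun i => ((fun j => A₂ (π₁ j)) + A₁) (π₂ i)) - B)
    (hZ₂ : Z₂ = T₂ - A₂)
    (hZ₁ : Z₁ = (fun i => (Z₂ + T₁) (π₁ i)) - A₁) :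
    B + ((fun i => Z₁ (π₂ i)) + Δ) = fun i => T (π₁ (π₂ i)) :=
  oblivious_shuffle_correct_general n G T₁ T₂ A₁ A₂ B T Δ Z₁ Z₂ π₁ π₂ hT hΔ hZ₂ hZ₁
end

section
/- Let a, b ∈ ℤ^m with preference bits p_i = (p_i[1], p_i[2]) ∈ {(0,0),(0,1),(1,0)} for each i ∈ {1,…,m}, and let B = {i : p_i[1] = 0} with preference 'min' on i if p_i[2] = 0 and 'max' on i if p_i[2] = 1. Define, for each i: α_i = 1 iff a[i] ≤ b[i]; α'_i = 1 iff b[i] ≤ a[i]; β_i = (¬p_i[2]) ∧ α_i; β'_i = p_i[2] ∧ α'_i; φ_i = β_i ⊕ β'_i; σ_i = φ_i ∨ p_i[1]; ω_i = (¬(α_i ∧ α'_i)) ∧ (¬p_i[1]); and set σ̂ = σ_1 ∧ ⋯ ∧ σ_m, ω̂ = ω_1 ∨ ⋯ ∨ ω_m, Φ = σ̂ ∧ ω̂. Then Φ = 1 if and only if a ≺_B b, i.e., the ObliDom evaluation correctly computes the user-defined dominance flag. -/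
/-- `a` dominates `b` on the user-selected dimensions `B = {i : p_i[1] = 0}` as
per the user preferences (`p_i[2] = 0` means min is preferred, `p_i[2] = 1`
means max is preferred). -/
def Dominates (m : ℕ) (p1 p2 : Fin m → Bool) (a b : Fin m → ℤ) : Prop :=
  (∀ j, p1 j = false →
      ((p2 j = false → a j ≤ b j) ∧ (p2 j = true → b j ≤ a j))) ∧
    ∃ j, p1 j = false ∧ a j ≠ b j

-- `σ_i`: the preference bit kills one of the two xor-ed terms.
theorem preferred_or_skipped_eq_true_iff {α : Type*} [LE α] [DecidableLE α] (x y : α)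
    (skip pmax : Bool) :
    ((Bool.xor ((!pmax) && decide (x ≤ y)) (pmax && decide (y ≤ x))) || skip) = true ↔
      (skip = false → (pmax = false → x ≤ y) ∧ (pmax = true → y ≤ x)) := by
  cases skip <;> cases pmax <;> simp

theorem differs_and_selected_eq_true_iff {α : Type*} [PartialOrder α] [DecidableLE α] (x y : α)
    (skip : Bool) :
    ((!(decide (x ≤ y) && decide (y ≤ x))) && !skip) = true ↔ skip = false ∧ x ≠ y := by
  simp [← not_and_or, ← le_antisymm_iff, and_comm]

theorem obliDom_correct_general (m : ℕ) (a b : Fin m → ℤ) (p1 p2 : Fin m → Bool)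
    (α α' β β' φ σ ω : Fin m → Bool) (σhat ωhat Φ : Bool)
    (hα : ∀ i, α i = decide (a i ≤ b i)) (hα' : ∀ i, α' i = decide (b i ≤ a i))
    (hβ : ∀ i, β i = ((! p2 i) && α i)) (hβ' : ∀ i, β' i = (p2 i && α' i))
    (hφ : ∀ i, φ i = Bool.xor (β i) (β' i))
    (hσ : ∀ i, σ i = (φ i || p1 i))
    (hω : ∀ i, ω i = ((! (α i && α' i)) && (! p1 i)))
    (hσhat : σhat = (List.finRange m).all fun i => σ i)
    (hωhat : ωhat = (List.finRange m).any fun i => ω i)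
    (hΦ : Φ = (σhat && ωhat)) :
    Φ = true ↔ Dominates m p1 p2 a b := by
  have hσ_iff (i : Fin m) : σ i = true ↔
      (p1 i = false → (p2 i = false → a i ≤ b i) ∧ (p2 i = true → b i ≤ a i)) := by
    rw [hσ, hφ, hβ, hβ', hα, hα']
    exact preferred_or_skipped_eq_true_iff _ _ _ _
  have hω_iff (i : Fin m) : ω i = true ↔ p1 i = false ∧ a i ≠ b i := by
    rw [hω, hα, hα']
    exact differs_and_selected_eq_true_iff _ _ _
  simp only [hΦ, hσhat, hωhat, Bool.and_eq_true, List.all_eq_true, List.any_eq_true,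
    List.mem_finRange, true_implies, true_and, hσ_iff, hω_iff, Dominates]

/-- Correctness of `ObliDom`: the flag `Φ = σ̂ ∧ ω̂` equals `1` iff `a ≺_B b`,
the user-defined dominance on the selected dimensions `B = {i : p_i[1] = 0}`. -/
theorem obliDom_correct (m : ℕ) (a b : Fin m → ℤ) (p1 p2 : Fin m → Bool)
    (hp : ∀ i, ¬ (p1 i = true ∧ p2 i = true))
    (α α' β β' φ σ ω : Fin m → Bool) (σhat ωhat Φ : Bool)
    (hα : ∀ i, α i = decide (a i ≤ b i)) (hα' : ∀ i, α' i = decide (b i ≤ a i))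
    (hβ : ∀ i, β i = ((! p2 i) && α i)) (hβ' : ∀ i, β' i = (p2 i && α' i))
    (hφ : ∀ i, φ i = Bool.xor (β i) (β' i))
    (hσ : ∀ i, σ i = (φ i || p1 i))
    (hω : ∀ i, ω i = ((! (α i && α' i)) && (! p1 i)))
    (hσhat : σhat = (List.finRange m).all fun i => σ i)
    (hωhat : ωhat = (List.finRange m).any fun i => ω i)
    (hΦ : Φ = (σhat && ωhat)) :
    Φ = true ↔ Dominates m p1 p2 a b :=
  obliDom_correct_general m a b p1 p2 α α' β β' φ σ ω σhat ωhat Φ hα hα' hβ hβ' hφ hσ hω hσhat hωhat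
    hΦ
end

section
/- Let C = (t_1, …, t_N) be a finite list of elements and ≺ an irreflexive and transitive binary relation on them. Then the block-nested-loop (BNL) algorithm, which processes the elements in order maintaining a window X (initialized to contain t_1; for each subsequent t_i, t_i is discarded if some x ∈ X satisfies x ≺ t_i, every x ∈ X with t_i ≺ x is removed from X, and t_i is inserted into X if it was not discarded), terminates with a window X whose set of elements equals the skyline Sky(C) = {p ∈ C : there is no p' ∈ C with p' ≺ p}. -/
/-- One step of the block-nested-loop (BNL) algorithm: given the current window
`X` and the next tuple `t`, every `x ∈ X` with `t ≺ x` is removed, and `t` is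
inserted unless some `x ∈ X` satisfies `x ≺ t` (in which case `t` is discarded). -/
def BNLstep {τ : Type*} (r : τ → τ → Prop) [DecidableRel r]
    (X : List τ) (t : τ) : List τ :=
  if X.any fun x => decide (r x t) then
    X.filter fun x => ! decide (r t x)
  else
    (X.filter fun x => ! decide (r t x)) ++ [t]

/-- The block-nested-loop (BNL) algorithm: the window is initialized to contain
the first tuple, and each subsequent tuple is processed by `BNLstep`. -/
def BNL {τ : Type*} (r : τ → τ → Prop) [DecidableRel r] : List τ → List τ
  | [] => []
  | t :: rest => rest.foldl (BNLstep r) [t]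

open List

/-!
The window after a prefix `S` of the input is exactly the skyline of `S`. When a new tuple `t`
arrives, the skyline of `S ++ [t]` consists of the old skyline elements not dominated by `t`,
together with `t` itself if nothing in `S` dominates it. The window can only test the latter
against its own elements; this suffices because in a finite strict order every dominated element
is dominated by a minimal one, i.e. by a skyline element.
-/

section Skyline

variable {τ : Type*} (r : τ → τ → Prop)

def skyline (C : List τ) : Set τ := {p | p ∈ C ∧ ¬ ∃ p' ∈ C, r p' p}

variable {r}

@[simp]
theorem skyline_nil : skyline r [] = ∅ := by
  simp [skyline]

theorem exists_mem_skyline_of_dominated [IsStrictOrder τ r] {C : List τ} {p : τ}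
    (h : ∃ q ∈ C, r q p) : ∃ q ∈ skyline r C, r q p := by
  have hwf := Set.wellFoundedOn_iff.1 (C.finite_toSet.wellFoundedOn (r := r))
  obtain ⟨q, ⟨hqC, hqp⟩, hmin⟩ := hwf.has_min {q | q ∈ C ∧ r q p} h
  refine ⟨q, ⟨hqC, ?_⟩, hqp⟩
  rintro ⟨q', hq'C, hq'q⟩
  exact hmin q' ⟨hq'C, _root_.trans hq'q hqp⟩ ⟨hq'q, hq'C, hqC⟩

theorem mem_skyline_append_singleton [IsStrictOrder τ r] {S : List τ} {t y : τ} :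
    y ∈ skyline r (S ++ [t]) ↔ (y ∈ skyline r S ∧ ¬ r t y) ∨ (y = t ∧ ¬ ∃ p ∈ S, r p t) := by
  rcases eq_or_ne y t with rfl | hyt
  · simp [skyline, irrefl]
  · simp [skyline, hyt, and_assoc]

end Skyline

section BNL

variable {τ : Type*} {r : τ → τ → Prop} [DecidableRel r]

theorem mem_BNLstep {X : List τ} {t y : τ} :
    y ∈ BNLstep r X t ↔ (y ∈ X ∧ ¬ r t y) ∨ (y = t ∧ ¬ ∃ x ∈ X, r x t) := by
  unfold BNLstep
  split_ifs with h <;> simp_all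

theorem BNL_eq_foldl (C : List τ) : BNL r C = C.foldl (BNLstep r) [] := by
  cases C <;> simp [BNL, BNLstep]

theorem mem_BNLstep_iff_mem_skyline [IsStrictOrder τ r] {S X : List τ}
    (hX : ∀ x, x ∈ X ↔ x ∈ skyline r S) (t y : τ) :
    y ∈ BNLstep r X t ↔ y ∈ skyline r (S ++ [t]) := by
  have hdom : (∃ x ∈ X, r x t) ↔ ∃ p ∈ S, r p t := by
    constructor
    · rintro ⟨x, hx, hxt⟩
      exact ⟨x, ((hX x).1 hx).1, hxt⟩
    · intro h
      obtain ⟨q, hq, hqt⟩ := exists_mem_skyline_of_dominated h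
      exact ⟨q, (hX q).2 hq, hqt⟩
  rw [mem_BNLstep, mem_skyline_append_singleton, hX, hdom]

theorem mem_foldl_BNLstep_iff_mem_skyline [IsStrictOrder τ r] (L : List τ) {S X : List τ}
    (hX : ∀ x, x ∈ X ↔ x ∈ skyline r S) (y : τ) :
    y ∈ L.foldl (BNLstep r) X ↔ y ∈ skyline r (S ++ L) := by
  induction L generalizing S X with
  | nil => simpa using hX y
  | cons t L ih =>
    rw [foldl_cons, ih (mem_BNLstep_iff_mem_skyline hX t), append_assoc, singleton_append]

end BNL

theorem bnl_correct_general {τ : Type*} (r : τ → τ → Prop) [DecidableRel r]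
    (hirr : ∀ a, ¬ r a a) (htrans : ∀ a b c, r a b → r b c → r a c)
    (C : List τ) :
    ∀ x, x ∈ BNL r C ↔ (x ∈ C ∧ ¬ ∃ p' ∈ C, r p' x) := by
  have : IsStrictOrder τ r := { irrefl := hirr, trans := htrans }
  intro x
  rw [BNL_eq_foldl]
  exact mem_foldl_BNLstep_iff_mem_skyline C (S := []) (by simp) x

/-- Correctness of the BNL algorithm: for an irreflexive and transitive
dominance relation `≺`, the final window's set of elements equals the skyline
`Sky(C) = {p ∈ C : ¬∃ p' ∈ C, p' ≺ p}`. -/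
theorem bnl_correct {τ : Type*} (r : τ → τ → Prop) [DecidableRel r]
    (hirr : ∀ a, ¬ r a a) (htrans : ∀ a b c, r a b → r b c → r a c)
    (C : List τ) (hC : C ≠ []) :
    ∀ x, x ∈ BNL r C ↔ (x ∈ C ∧ ¬ ∃ p' ∈ C, r p' x) :=
  bnl_correct_general r hirr htrans C
end
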